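/- Let G act measurably on a standard probability space (X, ν), where ν is μ-stationary for an admissible probability measure μ on G. Let u: X → ℝ be measurable such that f(g,x) := u(x) - u(gx) belongs to L¹(G × X, μ ⊗ ν). Then ∫_G ∫_X (u(x) - u(gx)) dν(x) dμ(g) = 0. -/

import Mathlib

/-!
Both `(g, x) ↦ x` and `(g, x) ↦ g • x` push `μ ⊗ ν` forward to `ν`, the second by stationarity.
Hence for every truncation `max (-n) (min n u)` of `u` the two halves of the integrand have the
same integral. Truncation is `1`-Lipschitz, so `|u x - u (g • x)|` dominates the truncated
differences, and dominated convergence passes the vanishing of their integrals to `u` itself.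
-/

open MeasureTheory

/-- The support of a measure on a topological space: points all of whose open
neighbourhoods have positive measure. -/
def measureSupport {G : Type*} [TopologicalSpace G] [MeasurableSpace G]
    (μ : Measure G) : Set G :=
  {g | ∀ U : Set G, IsOpen U → g ∈ U → 0 < μ U}

/-- Convolution powers of a measure on a group. -/
noncomputable def convPow {G : Type*} [Monoid G] [MeasurableSpace G]
    (μ : Measure G) : ℕ → Measure G
  | 0 => Measure.dirac 1
  | n + 1 => (convPow μ n).mconv μ

/-- A probability measure `μ` on a locally compact second countable group is admissible if
the semigroup generated by its support is dense and some convolution power of `μ` is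
absolutely continuous with respect to the Haar measure. -/
def Admissible {G : Type*} [Group G] [TopologicalSpace G] [IsTopologicalGroup G]
    [LocallyCompactSpace G] [MeasurableSpace G] [BorelSpace G] (μ : Measure G) : Prop :=
  Dense (Submonoid.closure (measureSupport μ) : Set G) ∧
    ∃ n : ℕ, 0 < n ∧ convPow μ n ≪ (Measure.haar : Measure G)

open Filter Topology

def truncate (c t : ℝ) : ℝ := max (-c) (min c t)

lemma lipschitzWith_truncate (c : ℝ) : LipschitzWith 1 (truncate c) :=
  (LipschitzWith.id.const_min c).const_max (-c)

lemma abs_truncate_sub_truncate_le (c s t : ℝ) : |truncate c s - truncate c t| ≤ |s - t| := by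
  simpa [Real.dist_eq] using (lipschitzWith_truncate c).dist_le_mul s t

lemma abs_truncate_le {c : ℝ} (hc : 0 ≤ c) (t : ℝ) : |truncate c t| ≤ c :=
  abs_le.2 ⟨le_max_left _ _, max_le (by linarith) (min_le_left _ _)⟩

lemma truncate_of_abs_le {c t : ℝ} (h : |t| ≤ c) : truncate c t = t := by
  rw [truncate, min_eq_right ((le_abs_self t).trans h), max_eq_right (neg_le_of_abs_le h)]

lemma tendsto_truncate (t : ℝ) : Tendsto (fun n : ℕ => truncate n t) atTop (𝓝 t) :=
  tendsto_const_nhds.congr' <|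
    (tendsto_natCast_atTop_atTop.eventually_ge_atTop |t|).mono fun _ hn =>
      (truncate_of_abs_le hn).symm

section PushforwardEq

variable {α β : Type*} [MeasurableSpace α] [MeasurableSpace β] {m : Measure α} {φ ψ : α → β}

lemma integral_comp_sub_comp_eq_zero_of_integrable (hφ : AEMeasurable φ m)
    (hψ : AEMeasurable ψ m) (hmap : m.map φ = m.map ψ) {w : β → ℝ}
    (hw : Integrable w (m.map φ)) : ∫ a, (w (φ a) - w (ψ a)) ∂m = 0 := by
  have hwψ : Integrable w (m.map ψ) := hmap ▸ hw
  have hwφ_comp : Integrable (fun a => w (φ a)) m := hw.comp_aemeasurable hφ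
  have hwψ_comp : Integrable (fun a => w (ψ a)) m := hwψ.comp_aemeasurable hψ
  rw [integral_sub hwφ_comp hwψ_comp, ← integral_map hφ hw.1,
    ← integral_map hψ hwψ.1, hmap, sub_self]

theorem integral_comp_sub_comp_eq_zero [IsFiniteMeasure m] (hφ : AEMeasurable φ m)
    (hψ : AEMeasurable ψ m) (hmap : m.map φ = m.map ψ) {v : β → ℝ}
    (hv : AEStronglyMeasurable v (m.map φ)) (hint : Integrable (fun a => v (φ a) - v (ψ a)) m) :
    ∫ a, (v (φ a) - v (ψ a)) ∂m = 0 := by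
  have htrunc (n : ℕ) : Integrable (truncate n ∘ v) (m.map φ) :=
    .of_bound ((lipschitzWith_truncate n).continuous.comp_aestronglyMeasurable hv) n
      (ae_of_all _ fun _ => abs_truncate_le n.cast_nonneg _)
  have hmeas (n : ℕ) :
      AEStronglyMeasurable (fun a => truncate n (v (φ a)) - truncate n (v (ψ a))) m :=
    (((htrunc n).comp_aemeasurable hφ).sub
      ((hmap ▸ htrunc n : Integrable _ _).comp_aemeasurable hψ) :).aestronglyMeasurable
  have hlim := tendsto_integral_of_dominated_convergence
    (F := fun n a => truncate n (v (φ a)) - truncate n (v (ψ a))) _ hmeas hint.norm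
    (fun n => ae_of_all _ fun a => abs_truncate_sub_truncate_le n (v (φ a)) (v (ψ a)))
    (ae_of_all _ fun a => (tendsto_truncate _).sub (tendsto_truncate _))
  have htrunc_zero (n : ℕ) : ∫ a, (truncate n (v (φ a)) - truncate n (v (ψ a))) ∂m = 0 :=
    integral_comp_sub_comp_eq_zero_of_integrable hφ hψ hmap (htrunc n)
  simp only [htrunc_zero] at hlim
  exact tendsto_nhds_unique hlim tendsto_const_nhds

end PushforwardEq

lemma map_smul_prod_eq_of_stationary {G X : Type*} [MeasurableSpace G] [MeasurableSpace X]
    [SMul G X] (hsmul : Measurable fun p : G × X => p.1 • p.2) {μ : Measure G} {ν : Measure X}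
    [SFinite ν] (hstat : ∀ A : Set X, MeasurableSet A → ν A = ∫⁻ g, ν ((g • ·) ⁻¹' A) ∂μ) :
    (μ.prod ν).map (fun p : G × X => p.1 • p.2) = ν := by
  ext A hA
  rw [Measure.map_apply hsmul hA, Measure.prod_apply (hsmul hA)]
  exact (hstat A hA).symm

theorem integral_integral_sub_smul_eq_zero_general
    {G : Type*} [Group G]
    [MeasurableSpace G]
    {X : Type*} [MeasurableSpace X] [MulAction G X]
    (hsmul : Measurable fun p : G × X => p.1 • p.2)
    (μ : Measure G) [IsProbabilityMeasure μ]
    (ν : Measure X) [IsProbabilityMeasure ν]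
    (hstat : ∀ A : Set X, MeasurableSet A → ν A = ∫⁻ g, ν ((g • ·) ⁻¹' A) ∂μ)
    (u : X → ℝ) (hu : Measurable u)
    (hint : Integrable (fun p : G × X => u p.2 - u (p.1 • p.2)) (μ.prod ν)) :
    ∫ g, ∫ x, (u x - u (g • x)) ∂ν ∂μ = 0 := by
  have hmap : (μ.prod ν).map Prod.snd = (μ.prod ν).map fun p : G × X => p.1 • p.2 := by
    rw [Measure.map_snd_prod, measure_univ, one_smul, map_smul_prod_eq_of_stationary hsmul hstat]
  rw [← integral_prod _ hint]
  exact integral_comp_sub_comp_eq_zero measurable_snd.aemeasurable hsmul.aemeasurable hmap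
    hu.aestronglyMeasurable hint

/-- Averaged cocycle vanishing: if `ν` is `μ`-stationary for an admissible `μ` and
`(g,x) ↦ u(x) - u(gx)` is integrable on `G × X`, then its double integral vanishes. -/
theorem integral_integral_sub_smul_eq_zero
    {G : Type*} [Group G] [TopologicalSpace G] [IsTopologicalGroup G]
    [LocallyCompactSpace G] [SecondCountableTopology G]
    [MeasurableSpace G] [BorelSpace G]
    {X : Type*} [MeasurableSpace X] [StandardBorelSpace X] [MulAction G X]
    (hsmul : Measurable fun p : G × X => p.1 • p.2)
    (μ : Measure G) [IsProbabilityMeasure μ] (hμ : Admissible μ)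
    (ν : Measure X) [IsProbabilityMeasure ν]
    (hstat : ∀ A : Set X, MeasurableSet A → ν A = ∫⁻ g, ν ((g • ·) ⁻¹' A) ∂μ)
    (u : X → ℝ) (hu : Measurable u)
    (hint : Integrable (fun p : G × X => u p.2 - u (p.1 • p.2)) (μ.prod ν)) :
    ∫ g, ∫ x, (u x - u (g • x)) ∂ν ∂μ = 0 :=
  integral_integral_sub_smul_eq_zero_general hsmul μ ν hstat u hu hint
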